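/- Let F be a field. Then F[[V_1,...,V_k]]/(V_1² − V_2², V_1² − V_3², ..., V_1² − V_k²) is a free F[[V_1]]-module of rank 2^{k−1}. -/

import Mathlib

open Finsupp MvPowerSeries

namespace Unlink9

variable {F : Type*} [Field F] {n : ℕ}

/-- one-variable power series embedded in `n+1` variables at index 0 -/
noncomputable def psiFun (c : PowerSeries F) : MvPowerSeries (Fin (n + 1)) F :=
fun e => if ∀ i, i ≠ 0 → e i = 0 then PowerSeries.coeff (e 0) c else 0

lemma coeff_psiFun_pos (c : PowerSeries F) {e : Fin (n + 1) →₀ ℕ}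
  (h : ∀ i, i ≠ (0 : Fin (n + 1)) → e i = 0) :
  MvPowerSeries.coeff e (psiFun c) = PowerSeries.coeff (e 0) c := by
  rw [coeff_apply, psiFun, if_pos h]

lemma coeff_psiFun_neg (c : PowerSeries F) {e : Fin (n + 1) →₀ ℕ}
  (h : ¬ ∀ i, i ≠ (0 : Fin (n + 1)) → e i = 0) :
  MvPowerSeries.coeff e (psiFun c) = 0 := by
  rw [coeff_apply, psiFun, if_neg h]

lemma eq_single_of {e : Fin (n + 1) →₀ ℕ} (h : ∀ i, i ≠ (0 : Fin (n + 1)) → e i = 0) :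
  e = Finsupp.single 0 (e 0) := by
  ext i
  rcases eq_or_ne i 0 with rfl | hi
  · simp
  · simp [Finsupp.single_apply, hi, h i hi, (Ne.symm hi : ¬ (0 : Fin (n+1)) = i)]

lemma psiFun_zero : (psiFun 0 : MvPowerSeries (Fin (n + 1)) F) = 0 := by
  apply MvPowerSeries.ext; intro d
  by_cases h : ∀ i, i ≠ (0 : Fin (n + 1)) → d i = 0
  · rw [coeff_psiFun_pos _ h]; simp
  · rw [coeff_psiFun_neg _ h]; simp
lemma psiFun_one : (psiFun 1 : MvPowerSeries (Fin (n + 1)) F) = 1 := by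
  classical
  apply MvPowerSeries.ext; intro d
  rw [MvPowerSeries.coeff_one]
  by_cases h : ∀ i, i ≠ (0 : Fin (n + 1)) → d i = 0
  · rw [coeff_psiFun_pos _ h, PowerSeries.coeff_one]
    by_cases h0 : d = 0
    · subst h0; simp
    · rw [if_neg h0, if_neg]
      intro hd0
      apply h0
      ext i
      rcases eq_or_ne i 0 with rfl | hi
      · simpa using hd0
      · simpa using h i hi
  · rw [coeff_psiFun_neg _ h, if_neg]
    rintro rfl
    exact h fun i _ => rfl
lemma psiFun_add (a b : PowerSeries F) : (psiFun (a + b) : MvPowerSeries (Fin (n + 1)) F) = psiFun a + psiFun b := by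
  apply MvPowerSeries.ext; intro d
  rw [map_add]
  by_cases h : ∀ i, i ≠ (0 : Fin (n + 1)) → d i = 0
  · rw [coeff_psiFun_pos _ h, coeff_psiFun_pos _ h, coeff_psiFun_pos _ h, map_add]
  · rw [coeff_psiFun_neg _ h, coeff_psiFun_neg _ h, coeff_psiFun_neg _ h]; ring
lemma psiFun_mul (a b : PowerSeries F) : (psiFun (a * b) : MvPowerSeries (Fin (n + 1)) F) = psiFun a * psiFun b := by
  classical
  apply MvPowerSeries.ext; intro d
  rw [MvPowerSeries.coeff_mul]
  by_cases h : ∀ i, i ≠ (0 : Fin (n + 1)) → d i = 0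
  · rw [coeff_psiFun_pos _ h, PowerSeries.coeff_mul]
    refine Finset.sum_bij' (fun q _ => (Finsupp.single (0 : Fin (n+1)) q.1, Finsupp.single (0 : Fin (n+1)) q.2))
      (fun p _ => (p.1 0, p.2 0)) ?_ ?_ ?_ ?_ ?_
    · intro q hq
      rw [Finset.HasAntidiagonal.mem_antidiagonal] at hq
      rw [Finset.HasAntidiagonal.mem_antidiagonal, ← Finsupp.single_add, hq]
      exact (eq_single_of h).symm
    · intro p hp
      rw [Finset.HasAntidiagonal.mem_antidiagonal] at hp
      rw [Finset.HasAntidiagonal.mem_antidiagonal]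
      calc p.1 0 + p.2 0 = (p.1 + p.2) 0 := by simp
      _ = d 0 := by rw [hp]
    · intro q hq
      simp
    · intro p hp
      rw [Finset.HasAntidiagonal.mem_antidiagonal] at hp
      have h1 : ∀ i, i ≠ (0 : Fin (n + 1)) → p.1 i = 0 := by
        intro i hi
        have h2 := DFunLike.congr_fun hp i
        simp only [Finsupp.add_apply] at h2
        have := h i hi
        omega
      have h2 : ∀ i, i ≠ (0 : Fin (n + 1)) → p.2 i = 0 := by
        intro i hi
        have h2 := DFunLike.congr_fun hp i
        simp only [Finsupp.add_apply] at h2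
        have := h i hi
        omega
      exact Prod.ext (eq_single_of h1).symm (eq_single_of h2).symm
    · intro q hq
      have e1 : ∀ m : ℕ, (Finsupp.single (0 : Fin (n+1)) m) 0 = m := fun m => by simp
      have s1 : ∀ i, i ≠ (0 : Fin (n + 1)) → (Finsupp.single (0 : Fin (n+1)) q.1) i = 0 := by
        intro i hi; simp [Finsupp.single_apply, (Ne.symm hi : ¬ (0 : Fin (n+1)) = i)]
      have s2 : ∀ i, i ≠ (0 : Fin (n + 1)) → (Finsupp.single (0 : Fin (n+1)) q.2) i = 0 := by
        intro i hi; simp [Finsupp.single_apply, (Ne.symm hi : ¬ (0 : Fin (n+1)) = i)]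
      rw [coeff_psiFun_pos _ s1, coeff_psiFun_pos _ s2, e1, e1]
  · rw [coeff_psiFun_neg _ h]
    push_neg at h
    obtain ⟨i0, hi0, hdi0⟩ := h
    refine (Finset.sum_eq_zero fun p hp => ?_).symm
    rw [Finset.HasAntidiagonal.mem_antidiagonal] at hp
    have hsum : p.1 i0 + p.2 i0 = d i0 := by
      have := DFunLike.congr_fun hp i0
      simpa using this
    rcases Nat.eq_zero_or_pos (p.1 i0) with h1 | h1
    · have hq : ¬ ∀ i, i ≠ (0 : Fin (n + 1)) → p.2 i = 0 := by
        intro hall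
        have := hall i0 hi0
        omega
      rw [coeff_psiFun_neg _ hq, mul_zero]
    · have hq : ¬ ∀ i, i ≠ (0 : Fin (n + 1)) → p.1 i = 0 := by
        intro hall
        have := hall i0 hi0
        omega
      rw [coeff_psiFun_neg _ hq, zero_mul]

noncomputable def psi : PowerSeries F →+* MvPowerSeries (Fin (n + 1)) F where
  toFun := psiFun
  map_zero' := psiFun_zero
  map_one' := psiFun_one
  map_add' := psiFun_add
  map_mul' := psiFun_mul

lemma coeff_psi_pos (c : PowerSeries F) {e : Fin (n + 1) →₀ ℕ}
    (h : ∀ i, i ≠ (0 : Fin (n + 1)) → e i = 0) :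
    MvPowerSeries.coeff e (psi c) = PowerSeries.coeff (e 0) c := coeff_psiFun_pos c h

lemma coeff_psi_neg (c : PowerSeries F) {e : Fin (n + 1) →₀ ℕ}
    (h : ¬ ∀ i, i ≠ (0 : Fin (n + 1)) → e i = 0) :
    MvPowerSeries.coeff e (psi c) = 0 := coeff_psiFun_neg c h

/-- parity vector of the non-distinguished exponents -/
def par (d : Fin (n + 1) →₀ ℕ) : Fin n → Bool := fun j => decide (d j.succ % 2 = 1)

/-- reduced weight -/
def wt (d : Fin (n + 1) →₀ ℕ) : ℕ := d 0 + ∑ j : Fin n, 2 * (d j.succ / 2)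

lemma le_wt_zero (d : Fin (n + 1) →₀ ℕ) : d 0 ≤ wt d := Nat.le_add_right _ _

lemma two_mul_div_le_wt (d : Fin (n + 1) →₀ ℕ) (j : Fin n) : 2 * (d j.succ / 2) ≤ wt d :=
  le_trans (Finset.single_le_sum (f := fun j : Fin n => 2 * (d j.succ / 2))
    (fun _ _ => Nat.zero_le _) (Finset.mem_univ j)) (Nat.le_add_left _ _)

noncomputable def DD (m : ℕ) (ε : Fin n → Bool) : Finset (Fin (n + 1) →₀ ℕ) :=
  (Finset.Iic (Finsupp.equivFunOnFinite.symm fun _ => m + 1)).filter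
    fun d => par d = ε ∧ wt d = m

lemma mem_DD {m : ℕ} {ε : Fin n → Bool} {d : Fin (n + 1) →₀ ℕ} :
    d ∈ DD m ε ↔ par d = ε ∧ wt d = m := by
  rw [DD, Finset.mem_filter, Finset.mem_Iic, and_iff_right_iff_imp]
  rintro ⟨-, hwt⟩
  rw [Finsupp.le_def]
  intro i
  have hb : (Finsupp.equivFunOnFinite.symm fun _ : Fin (n+1) => m + 1) i = m + 1 := by
    simp [Finsupp.coe_equivFunOnFinite_symm]
  rw [hb]
  rcases Fin.eq_zero_or_eq_succ i with rfl | ⟨j, rfl⟩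
  · have := le_wt_zero d; omega
  · have := two_mul_div_le_wt d j; omega

lemma par_add_single (d : Fin (n + 1) →₀ ℕ) (g : Fin (n + 1)) :
    par (d + Finsupp.single g 2) = par d := by
  funext j
  unfold par
  have h : ((d + Finsupp.single g 2 : Fin (n+1) →₀ ℕ)) j.succ
      = d j.succ + (if g = j.succ then 2 else 0) := by
    rw [Finsupp.add_apply, Finsupp.single_apply]
  rw [h]
  rcases eq_or_ne g j.succ with hg | hg
  · rw [if_pos hg]
    exact decide_eq_decide.mpr (by omega)
  · rw [if_neg hg, Nat.add_zero]

lemma wt_add_single (d : Fin (n + 1) →₀ ℕ) (g : Fin (n + 1)) :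
    wt (d + Finsupp.single g 2) = wt d + 2 := by
  unfold wt
  rcases Fin.eq_zero_or_eq_succ g with rfl | ⟨j, rfl⟩
  · have h1 : ((d + Finsupp.single (0 : Fin (n+1)) 2 : Fin (n+1) →₀ ℕ)) 0 = d 0 + 2 := by
      rw [Finsupp.add_apply, Finsupp.single_apply]; simp
    have h2 : ∀ i : Fin n, ((d + Finsupp.single (0 : Fin (n+1)) 2 : Fin (n+1) →₀ ℕ)) i.succ
        = d i.succ := by
      intro i
      rw [Finsupp.add_apply, Finsupp.single_apply, if_neg (Fin.succ_ne_zero i).symm, add_zero]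
    rw [h1]
    simp only [h2]
    omega
  · have h1 : ((d + Finsupp.single j.succ 2 : Fin (n+1) →₀ ℕ)) 0 = d 0 := by
      rw [Finsupp.add_apply, Finsupp.single_apply, if_neg (Fin.succ_ne_zero j), add_zero]
    have h2 : ∀ i : Fin n, ((d + Finsupp.single j.succ 2 : Fin (n+1) →₀ ℕ)) i.succ
        = d i.succ + (if j = i then 2 else 0) := by
      intro i
      rw [Finsupp.add_apply, Finsupp.single_apply]
      simp [Fin.succ_inj]
    rw [h1]
    simp only [h2]
    have h3 : ∀ i : Fin n, 2 * ((d i.succ + (if j = i then 2 else 0)) / 2)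
        = 2 * (d i.succ / 2) + (if j = i then 2 else 0) := by
      intro i; split <;> omega
    simp only [h3, Finset.sum_add_distrib, Finset.sum_ite_eq, Finset.mem_univ, if_pos]
    omega

lemma sum_DD_shift (f : MvPowerSeries (Fin (n + 1)) F) (g : Fin (n + 1))
    (ε : Fin n → Bool) (m : ℕ) :
    ∑ d ∈ DD m ε, (if Finsupp.single g 2 ≤ d then f (d - Finsupp.single g 2) else 0)
      = if 2 ≤ m then ∑ d ∈ DD (m - 2) ε, f d else 0 := by
  by_cases hm : 2 ≤ m
  · rw [if_pos hm, ← Finset.sum_filter]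
    refine Finset.sum_bij' (fun d _ => d - Finsupp.single g 2)
      (fun d _ => d + Finsupp.single g 2) ?_ ?_ ?_ ?_ ?_
    · intro d hd
      rw [Finset.mem_filter] at hd
      obtain ⟨hd1, hd2⟩ := hd
      rw [mem_DD] at hd1 ⊢
      have he : d - Finsupp.single g 2 + Finsupp.single g 2 = d := tsub_add_cancel_of_le hd2
      constructor
      · have hp := par_add_single (d - Finsupp.single g 2) g
        rw [he] at hp
        rw [← hp, hd1.1]
      · show wt (d - Finsupp.single g 2) = m - 2
        have := wt_add_single (d - Finsupp.single g 2) g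
        rw [he] at this
        omega
    · intro d hd
      rw [mem_DD] at hd
      rw [Finset.mem_filter, mem_DD]
      refine ⟨⟨?_, ?_⟩, le_add_self⟩
      · rw [par_add_single, hd.1]
      · rw [wt_add_single, hd.2]; omega
    · intro d hd
      rw [Finset.mem_filter] at hd
      exact tsub_add_cancel_of_le hd.2
    · intro d hd
      exact add_tsub_cancel_right _ _
    · intro d hd
      rfl
  · rw [if_neg hm]
    refine Finset.sum_eq_zero fun d hd => ?_
    rw [mem_DD] at hd
    rw [if_neg]
    intro hle
    have hg : 2 ≤ d g := by
      have := Finsupp.le_def.mp hle g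
      simpa using this
    rcases Fin.eq_zero_or_eq_succ g with rfl | ⟨j, rfl⟩
    · have := le_wt_zero d; omega
    · have := two_mul_div_le_wt d j; omega

noncomputable def SC (f : MvPowerSeries (Fin (n + 1)) F) (ε : Fin n → Bool) (m : ℕ) : F :=
  ∑ d ∈ DD m ε, f d

lemma SC_finsum {ι : Type*} (s : Finset ι) (h : ι → MvPowerSeries (Fin (n + 1)) F)
    (ε : Fin n → Bool) (m : ℕ) :
    SC (∑ i ∈ s, h i) ε m = ∑ i ∈ s, SC (h i) ε m := by
  unfold SC
  refine Eq.trans ?_ Finset.sum_comm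
  refine Finset.sum_congr rfl fun d _ => ?_
  exact map_sum (MvPowerSeries.coeff (R := F) d) h s

lemma SC_gen_mul (g : Fin (n + 1)) (f : MvPowerSeries (Fin (n + 1)) F)
    (ε : Fin n → Bool) (m : ℕ) :
    SC ((X 0 ^ 2 - X g ^ 2) * f) ε m = 0 := by
  unfold SC
  have key : ∀ w : Fin (n + 1), ∀ d : Fin (n+1) →₀ ℕ,
      ((X w ^ 2 : MvPowerSeries (Fin (n+1)) F) * f) d
      = if Finsupp.single w 2 ≤ d then f (d - Finsupp.single w 2) else 0 := by
    intro w d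
    have h0 : (X w ^ 2 * f : MvPowerSeries (Fin (n+1)) F) d
        = MvPowerSeries.coeff d (X w ^ 2 * f) := rfl
    rw [h0, X_pow_eq, coeff_monomial_mul]
    split <;> simp [coeff_apply]
  have key2 : ∀ d : Fin (n+1) →₀ ℕ,
      ((X 0 ^ 2 - X g ^ 2 : MvPowerSeries (Fin (n+1)) F) * f) d
      = (if Finsupp.single (0 : Fin (n+1)) 2 ≤ d then f (d - Finsupp.single 0 2) else 0)
        - (if Finsupp.single g 2 ≤ d then f (d - Finsupp.single g 2) else 0) := by
    intro d
    rw [sub_mul]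
    rw [show ((X 0 ^ 2 * f - X g ^ 2 * f : MvPowerSeries (Fin (n+1)) F) d)
        = (X 0 ^ 2 * f : MvPowerSeries (Fin (n+1)) F) d
          - (X g ^ 2 * f : MvPowerSeries (Fin (n+1)) F) d from rfl, key, key]
  simp only [key2, Finset.sum_sub_distrib, sum_DD_shift]
  exact sub_self _

/-- exponent of the basis monomial indexed by `ε` -/
noncomputable def E (ε : Fin n → Bool) : Fin (n + 1) →₀ ℕ :=
  Finsupp.equivFunOnFinite.symm (Fin.cons 0 fun j => cond (ε j) 1 0)

lemma E_zero (ε : Fin n → Bool) : E ε 0 = 0 := by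
  simp [E, Finsupp.coe_equivFunOnFinite_symm]

lemma E_succ (ε : Fin n → Bool) (j : Fin n) : E ε j.succ = cond (ε j) 1 0 := by
  simp [E, Finsupp.coe_equivFunOnFinite_symm]

lemma Epm_zero (ε : Fin n → Bool) (m : ℕ) :
    ((E ε + Finsupp.single (0 : Fin (n+1)) m : Fin (n+1) →₀ ℕ)) 0 = m := by
  rw [Finsupp.add_apply, E_zero, Finsupp.single_apply]; simp

lemma Epm_succ (ε : Fin n → Bool) (m : ℕ) (j : Fin n) :
    ((E ε + Finsupp.single (0 : Fin (n+1)) m : Fin (n+1) →₀ ℕ)) j.succ = cond (ε j) 1 0 := by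
  rw [Finsupp.add_apply, E_succ, Finsupp.single_apply, if_neg (Fin.succ_ne_zero j).symm, add_zero]

lemma coeff_psi_mul_monomial (c : PowerSeries F) (ε : Fin n → Bool) (d : Fin (n + 1) →₀ ℕ) :
    MvPowerSeries.coeff d (psi c * monomial (E ε) 1)
      = if E ε ≤ d ∧ ∀ i, i ≠ (0 : Fin (n + 1)) → (d - E ε) i = 0
        then PowerSeries.coeff (d 0) c else 0 := by
  classical
  rw [coeff_mul_monomial]
  by_cases h1 : E ε ≤ d
  · rw [if_pos h1, mul_one]
    by_cases h2 : ∀ i, i ≠ (0 : Fin (n + 1)) → (d - E ε) i = 0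
    · rw [coeff_psi_pos _ h2, if_pos ⟨h1, h2⟩]
      have : ((d - E ε : Fin (n+1) →₀ ℕ)) 0 = d 0 := by
        rw [Finsupp.tsub_apply, E_zero, Nat.sub_zero]
      rw [this]
    · rw [coeff_psi_neg _ h2, if_neg (by tauto)]
  · rw [if_neg h1, if_neg (by tauto)]

lemma guard_eq {ε : Fin n → Bool} {d : Fin (n + 1) →₀ ℕ}
    (hle : E ε ≤ d) (hsup : ∀ i, i ≠ (0 : Fin (n + 1)) → (d - E ε) i = 0) :
    (∀ j : Fin n, d j.succ = cond (ε j) 1 0) ∧ par d = ε ∧ wt d = d 0 := by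
  have hco : ∀ j : Fin n, d j.succ = cond (ε j) 1 0 := by
    intro j
    have h1 := hsup j.succ (Fin.succ_ne_zero j)
    rw [Finsupp.tsub_apply, E_succ] at h1
    have h2 : E ε j.succ ≤ d j.succ := Finsupp.le_def.mp hle j.succ
    rw [E_succ] at h2
    omega
  refine ⟨hco, ?_, ?_⟩
  · funext j
    unfold par
    rw [hco j]
    cases ε j <;> simp
  · unfold wt
    have h3 : ∀ j : Fin n, 2 * (d j.succ / 2) = 0 := by
      intro j
      rw [hco j]
      cases ε j <;> simp
    simp [h3]

lemma mem_DD_E (ε : Fin n → Bool) (m : ℕ) :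
    E ε + Finsupp.single (0 : Fin (n + 1)) m ∈ (DD m ε : Finset (Fin (n+1) →₀ ℕ)) := by
  rw [mem_DD]
  constructor
  · funext j
    unfold par
    rw [Epm_succ]
    cases ε j <;> simp
  · unfold wt
    rw [Epm_zero]
    have h3 : ∀ j : Fin n,
        2 * (((E ε + Finsupp.single (0:Fin (n+1)) m : Fin (n+1) →₀ ℕ)) j.succ / 2) = 0 := by
      intro j
      rw [Epm_succ]
      cases ε j <;> simp
    rw [Finset.sum_eq_zero fun j _ => h3 j, add_zero]

lemma eq_Epm {ε : Fin n → Bool} {d : Fin (n + 1) →₀ ℕ}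
    (hco : ∀ j : Fin n, d j.succ = cond (ε j) 1 0) :
    d = E ε + Finsupp.single (0 : Fin (n+1)) (d 0) := by
  ext i
  rcases Fin.eq_zero_or_eq_succ i with rfl | ⟨j, rfl⟩
  · rw [Epm_zero]
  · rw [Epm_succ, hco j]

lemma SC_psi_mul_monomial (c : PowerSeries F) (ε ε' : Fin n → Bool) (m : ℕ) :
    SC (psi c * monomial (E ε) 1) ε' m
      = if ε = ε' then PowerSeries.coeff m c else 0 := by
  classical
  unfold SC
  have hterm : ∀ d : Fin (n+1) →₀ ℕ,
      (psi c * monomial (E ε) 1 : MvPowerSeries (Fin (n+1)) F) d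
      = if E ε ≤ d ∧ ∀ i, i ≠ (0 : Fin (n + 1)) → (d - E ε) i = 0
        then PowerSeries.coeff (d 0) c else 0 := fun d => coeff_psi_mul_monomial c ε d
  by_cases hee : ε = ε'
  · subst hee
    rw [if_pos rfl]
    refine Eq.trans (Finset.sum_eq_single_of_mem (E ε + Finsupp.single (0 : Fin (n+1)) m) (mem_DD_E ε m) ?_) ?_
    swap
    · rw [hterm, if_pos, Epm_zero]
      constructor
      · exact self_le_add_right _ _
      · intro i hi
        rw [add_tsub_cancel_left, Finsupp.single_apply, if_neg (Ne.symm hi)]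
    · intro d hd hne
      rw [hterm, if_neg]
      rintro ⟨hle, hsup⟩
      obtain ⟨hco, hpar, hwt⟩ := guard_eq hle hsup
      obtain ⟨-, hwt'⟩ := mem_DD.mp hd
      apply hne
      have hd0 : d 0 = m := by omega
      rw [eq_Epm hco, hd0]
  · rw [if_neg hee]
    refine Finset.sum_eq_zero fun d hd => ?_
    rw [hterm, if_neg]
    rintro ⟨hle, hsup⟩
    obtain ⟨-, hpar, -⟩ := guard_eq hle hsup
    obtain ⟨hpar', -⟩ := mem_DD.mp hd
    exact hee (hpar ▸ hpar')

/-- `f` has all exponents of variable `j.succ` at most 1 -/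
def Red (j : Fin n) (f : MvPowerSeries (Fin (n + 1)) F) : Prop :=
  ∀ d : Fin (n+1) →₀ ℕ, 2 ≤ d j.succ → f d = 0

lemma reduced_eq_sum (g : MvPowerSeries (Fin (n + 1)) F) (hred : ∀ j, Red j g) :
    g = ∑ ε : Fin n → Bool,
      psi (PowerSeries.mk fun m => g (E ε + Finsupp.single (0 : Fin (n+1)) m))
        * monomial (E ε) 1 := by
  classical
  apply MvPowerSeries.ext; intro d
  rw [map_sum]
  simp only [coeff_psi_mul_monomial, PowerSeries.coeff_mk]
  by_cases hd : ∀ j : Fin n, d j.succ ≤ 1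
  · have hcd : ∀ j : Fin n, cond (decide (d j.succ = 1)) 1 0 = d j.succ := by
      intro j
      have := hd j
      rcases Nat.le_one_iff_eq_zero_or_eq_one.mp this with h | h <;> simp [h]
    rw [Finset.sum_eq_single_of_mem (fun j => decide (d j.succ = 1)) (Finset.mem_univ _)]
    · rw [if_pos, coeff_apply]
      · congr 1
        exact eq_Epm fun j => (hcd j).symm
      constructor
      · rw [Finsupp.le_def]
        intro i
        rcases Fin.eq_zero_or_eq_succ i with rfl | ⟨j, rfl⟩
        · rw [E_zero]; exact Nat.zero_le _
        · rw [E_succ, hcd j]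
      · intro i hi
        rcases Fin.eq_zero_or_eq_succ i with rfl | ⟨j, rfl⟩
        · exact absurd rfl hi
        · rw [Finsupp.tsub_apply, E_succ, hcd j, Nat.sub_self]
    · intro ε _ hne
      rw [if_neg]
      rintro ⟨hle, hsup⟩
      obtain ⟨hco, -, -⟩ := guard_eq hle hsup
      apply hne
      funext j
      rw [hco j]
      cases ε j <;> simp
  · push_neg at hd
    obtain ⟨j0, hj0⟩ := hd
    rw [coeff_apply, hred j0 d hj0]
    symm
    refine Finset.sum_eq_zero fun ε _ => ?_
    rw [if_neg]
    rintro ⟨hle, hsup⟩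
    obtain ⟨hco, -, -⟩ := guard_eq hle hsup
    have hll := hco j0
    cases h : ε j0 <;> simp [h] at hll <;> omega

noncomputable def upd (d : Fin (n + 1) →₀ ℕ) (j : Fin n) (a b : ℕ) : Fin (n + 1) →₀ ℕ :=
  Finsupp.update (Finsupp.update d 0 a) j.succ b

lemma upd_apply (d : Fin (n + 1) →₀ ℕ) (j : Fin n) (a b : ℕ) (i : Fin (n + 1)) :
    upd d j a b i = if i = j.succ then b else if i = 0 then a else d i := by
  classical
  simp [upd, Finsupp.coe_update, Function.update_apply]

lemma upd_apply_zero (d : Fin (n + 1) →₀ ℕ) (j : Fin n) (a b : ℕ) :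
    upd d j a b 0 = a := by
  rw [upd_apply, if_neg (Fin.succ_ne_zero j).symm, if_pos rfl]

lemma upd_apply_succ (d : Fin (n + 1) →₀ ℕ) (j : Fin n) (a b : ℕ) :
    upd d j a b j.succ = b := by
  rw [upd_apply, if_pos rfl]

lemma upd_eq_self (d : Fin (n + 1) →₀ ℕ) (j : Fin n) :
    upd d j (d 0) (d j.succ) = d := by
  ext i
  rw [upd_apply]
  split_ifs with h1 h2
  · rw [h1]
  · rw [h2]
  · rfl

lemma upd_congr {d' d : Fin (n + 1) →₀ ℕ} {j : Fin n}
    (h : ∀ i, i ≠ (0 : Fin (n+1)) → i ≠ j.succ → d' i = d i) (a b : ℕ) :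
    upd d' j a b = upd d j a b := by
  ext i
  rw [upd_apply, upd_apply]
  split_ifs with h1 h2
  · rfl
  · rfl
  · exact h i h2 h1

/-- reduce the exponents of variable `j.succ` to 0 or 1 by moving them to variable 0 -/
noncomputable def Rred (j : Fin n) (f : MvPowerSeries (Fin (n + 1)) F) :
    MvPowerSeries (Fin (n + 1)) F :=
  fun d => if d j.succ ≤ 1 then
    ∑ i ∈ Finset.range (d 0 / 2 + 1), f (upd d j (d 0 - 2 * i) (d j.succ + 2 * i))
  else 0

/-- the quotient witnessing `f - Rred j f` as a multiple of `X j.succ ^ 2 - X 0 ^ 2` -/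
noncomputable def Hdiv (j : Fin n) (f : MvPowerSeries (Fin (n + 1)) F) :
    MvPowerSeries (Fin (n + 1)) F :=
  fun e => ∑ i ∈ Finset.range (e 0 / 2 + 1), f (upd e j (e 0 - 2 * i) (e j.succ + 2 * i + 2))

lemma Hdiv_apply (j : Fin n) (f : MvPowerSeries (Fin (n + 1)) F) (e : Fin (n+1) →₀ ℕ) :
    Hdiv j f e
      = ∑ i ∈ Finset.range (e 0 / 2 + 1), f (upd e j (e 0 - 2 * i) (e j.succ + 2 * i + 2)) := rfl

lemma sub_Rred (j : Fin n) (f : MvPowerSeries (Fin (n + 1)) F) :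
    f - Rred j f = (X j.succ ^ 2 - X 0 ^ 2) * Hdiv j f := by
  apply MvPowerSeries.ext; intro d
  have hrhs : MvPowerSeries.coeff d ((X j.succ ^ 2 - X 0 ^ 2) * Hdiv j f)
      = (if 2 ≤ d j.succ then Hdiv j f (d - Finsupp.single j.succ 2) else 0)
        - (if 2 ≤ d 0 then Hdiv j f (d - Finsupp.single 0 2) else 0) := by
    rw [sub_mul, map_sub, X_pow_eq, X_pow_eq, coeff_monomial_mul, coeff_monomial_mul]
    simp only [Finsupp.single_le_iff, one_mul, coeff_apply]
  rw [hrhs, map_sub, coeff_apply, coeff_apply]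
  have hR : Rred j f d = if d j.succ ≤ 1 then
      ∑ i ∈ Finset.range (d 0 / 2 + 1), f (upd d j (d 0 - 2 * i) (d j.succ + 2 * i))
    else 0 := rfl
  have key1 : 2 ≤ d j.succ → Hdiv j f (d - Finsupp.single j.succ 2)
      = ∑ i ∈ Finset.range (d 0 / 2 + 1), f (upd d j (d 0 - 2 * i) (d j.succ + 2 * i)) := by
    intro h2b
    have h0 : ((d - Finsupp.single j.succ 2 : Fin (n+1) →₀ ℕ)) 0 = d 0 := by
      rw [Finsupp.tsub_apply, Finsupp.single_apply, if_neg (Fin.succ_ne_zero j), Nat.sub_zero]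
    have hs : ((d - Finsupp.single j.succ 2 : Fin (n+1) →₀ ℕ)) j.succ = d j.succ - 2 := by
      rw [Finsupp.tsub_apply, Finsupp.single_apply, if_pos rfl]
    rw [Hdiv_apply, h0, hs]
    refine Finset.sum_congr rfl fun i _ => ?_
    rw [upd_congr (d' := d - Finsupp.single j.succ 2) (d := d) (j := j) (fun i' hi0 hij => by
      rw [Finsupp.tsub_apply, Finsupp.single_apply, if_neg (Ne.symm hij), Nat.sub_zero])]
    have he : d j.succ - 2 + 2 * i + 2 = d j.succ + 2 * i := by omega
    rw [he]
  have key2 : 2 ≤ d 0 → Hdiv j f (d - Finsupp.single (0 : Fin (n+1)) 2)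
      = ∑ i ∈ Finset.range ((d 0 - 2) / 2 + 1),
          f (upd d j (d 0 - 2 * (i + 1)) (d j.succ + 2 * (i + 1))) := by
    intro h2a
    have h0 : ((d - Finsupp.single (0 : Fin (n+1)) 2 : Fin (n+1) →₀ ℕ)) 0 = d 0 - 2 := by
      rw [Finsupp.tsub_apply, Finsupp.single_apply, if_pos rfl]
    have hs : ((d - Finsupp.single (0 : Fin (n+1)) 2 : Fin (n+1) →₀ ℕ)) j.succ = d j.succ := by
      rw [Finsupp.tsub_apply, Finsupp.single_apply, if_neg (Fin.succ_ne_zero j).symm, Nat.sub_zero]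
    rw [Hdiv_apply, h0, hs]
    refine Finset.sum_congr rfl fun i _ => ?_
    rw [upd_congr (d' := d - Finsupp.single (0 : Fin (n+1)) 2) (d := d) (j := j) (fun i' hi0 hij => by
      rw [Finsupp.tsub_apply, Finsupp.single_apply, if_neg (Ne.symm hi0), Nat.sub_zero])]
    have he1 : d 0 - 2 - 2 * i = d 0 - 2 * (i + 1) := by omega
    have he2 : d j.succ + 2 * i + 2 = d j.succ + 2 * (i + 1) := by omega
    rw [he1, he2]
  by_cases hb : 2 ≤ d j.succ
  · rw [if_pos hb, key1 hb, hR, if_neg (by omega)]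
    by_cases ha : 2 ≤ d 0
    · rw [if_pos ha, key2 ha]
      have hsplit : d 0 / 2 + 1 = ((d 0 - 2) / 2 + 1) + 1 := by omega
      rw [hsplit, Finset.sum_range_succ']
      simp only [Nat.mul_zero, Nat.sub_zero, Nat.add_zero, upd_eq_self]
      ring
    · rw [if_neg ha]
      have hsmall : d 0 / 2 + 1 = 1 := by omega
      rw [hsmall, Finset.sum_range_one]
      simp only [Nat.mul_zero, Nat.sub_zero, Nat.add_zero, upd_eq_self]
  · rw [if_neg hb, hR, if_pos (by omega)]
    by_cases ha : 2 ≤ d 0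
    · rw [if_pos ha, key2 ha]
      have hsplit : d 0 / 2 + 1 = ((d 0 - 2) / 2 + 1) + 1 := by omega
      rw [hsplit, Finset.sum_range_succ']
      simp only [Nat.mul_zero, Nat.sub_zero, Nat.add_zero, upd_eq_self]
      ring
    · rw [if_neg ha]
      have hsmall : d 0 / 2 + 1 = 1 := by omega
      rw [hsmall, Finset.sum_range_one]
      simp only [Nat.mul_zero, Nat.sub_zero, Nat.add_zero, upd_eq_self]
      ring

lemma red_Rred_self (j : Fin n) (f : MvPowerSeries (Fin (n + 1)) F) : Red j (Rred j f) := by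
  intro d hd
  show (if d j.succ ≤ 1 then _ else (0:F)) = 0
  rw [if_neg (by omega)]

lemma red_Rred_other {i : Fin n} (j : Fin n) {f : MvPowerSeries (Fin (n + 1)) F}
    (h : Red i f) (hij : i ≠ j) : Red i (Rred j f) := by
  intro d hd
  show (if d j.succ ≤ 1 then ∑ m ∈ Finset.range (d 0 / 2 + 1),
      f (upd d j (d 0 - 2 * m) (d j.succ + 2 * m)) else (0:F)) = 0
  split_ifs with hc
  · refine Finset.sum_eq_zero fun m _ => ?_
    apply h
    rw [upd_apply, if_neg (fun hcc => hij (Fin.succ_injective _ hcc)),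
      if_neg (Fin.succ_ne_zero i)]
    exact hd
  · rfl

lemma exists_reduce (l : List (Fin n)) (f : MvPowerSeries (Fin (n + 1)) F) :
    ∃ g : MvPowerSeries (Fin (n + 1)) F,
      f - g ∈ Ideal.span (Set.range fun g : Fin (n+1) =>
        (X 0 ^ 2 - X g ^ 2 : MvPowerSeries (Fin (n+1)) F)) ∧
      ∀ j : Fin n, (j ∈ l ∨ Red j f) → Red j g := by
  induction l generalizing f with
  | nil =>
    refine ⟨f, by simp, fun j hj => ?_⟩
    rcases hj with hj | hj
    · exact absurd hj List.not_mem_nil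
    · exact hj
  | cons j l ih =>
    obtain ⟨g, hg1, hg2⟩ := ih (Rred j f)
    refine ⟨g, ?_, ?_⟩
    · have hstep : f - Rred j f ∈ Ideal.span (Set.range fun g : Fin (n+1) =>
          (X 0 ^ 2 - X g ^ 2 : MvPowerSeries (Fin (n+1)) F)) := by
        rw [sub_Rred]
        have hmem : (X 0 ^ 2 - X j.succ ^ 2 : MvPowerSeries (Fin (n+1)) F)
            ∈ Ideal.span (Set.range fun g : Fin (n+1) =>
              (X 0 ^ 2 - X g ^ 2 : MvPowerSeries (Fin (n+1)) F)) :=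
          Ideal.subset_span ⟨j.succ, rfl⟩
        have := Ideal.mul_mem_right (-(Hdiv j f)) _ hmem
        have heq : (X 0 ^ 2 - X j.succ ^ 2 : MvPowerSeries (Fin (n+1)) F) * (-(Hdiv j f))
            = (X j.succ ^ 2 - X 0 ^ 2) * Hdiv j f := by ring
        rwa [heq] at this
      have : f - g = (f - Rred j f) + (Rred j f - g) := by ring
      rw [this]
      exact Ideal.add_mem _ hstep hg1
    · intro j' hj'
      rcases hj' with hj' | hj'
      · rcases List.mem_cons.mp hj' with rfl | hj'
        · exact hg2 j' (Or.inr (red_Rred_self j' f))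
        · exact hg2 j' (Or.inl hj')
      · rcases eq_or_ne j' j with rfl | hne
        · exact hg2 j' (Or.inr (red_Rred_self j' f))
        · exact hg2 j' (Or.inr (red_Rred_other j hj' hne))

lemma psi_X : (psi PowerSeries.X : MvPowerSeries (Fin (n + 1)) F) = X 0 := by
  classical
  apply MvPowerSeries.ext; intro d
  rw [MvPowerSeries.coeff_X]
  by_cases h : ∀ i, i ≠ (0 : Fin (n + 1)) → d i = 0
  · rw [coeff_psi_pos _ h, PowerSeries.coeff_X]
    by_cases h1 : d 0 = 1
    · rw [if_pos h1, if_pos]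
      rw [eq_single_of h, h1]
    · rw [if_neg h1, if_neg]
      intro hc
      apply h1
      rw [hc]
      simp
  · rw [coeff_psi_neg _ h, if_neg]
    rintro rfl
    apply h
    intro i hi
    rw [Finsupp.single_apply, if_neg (Ne.symm hi)]

lemma psi_C (a : F) : (psi (PowerSeries.C (R := F) a) : MvPowerSeries (Fin (n + 1)) F)
    = MvPowerSeries.C (σ := Fin (n+1)) (R := F) a := by
  classical
  apply MvPowerSeries.ext; intro d
  rw [MvPowerSeries.coeff_C]
  by_cases h : ∀ i, i ≠ (0 : Fin (n + 1)) → d i = 0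
  · rw [coeff_psi_pos _ h, PowerSeries.coeff_C]
    by_cases h1 : d 0 = 0
    · rw [if_pos h1, if_pos]
      ext i
      rcases eq_or_ne i 0 with rfl | hi
      · simpa using h1
      · simpa using h i hi
    · rw [if_neg h1, if_neg]
      rintro rfl
      exact h1 rfl
  · rw [coeff_psi_neg _ h, if_neg]
    rintro rfl
    exact h fun i _ => rfl

lemma SC_mul_gen (g : Fin (n + 1)) (f : MvPowerSeries (Fin (n + 1)) F)
    (ε : Fin n → Bool) (m : ℕ) :
    SC (f * (X 0 ^ 2 - X g ^ 2)) ε m = 0 := by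
  rw [mul_comm]; exact SC_gen_mul g f ε m

end Unlink9

/-- `F[[V₁,…,V_k]]/(V₁² - V_j²)` (the minus-version unoriented link Floer homology of the
`k`-component unlink) is a free module of rank `2^{k-1}` over `F[[V₁]]`, where `F[[V₁]]` acts
via the canonical map sending the power series variable to the class of `V₁`. -/
theorem stmt9 (F : Type*) [Field F] (k : ℕ) (hk : 0 < k)
    (I : Ideal (MvPowerSeries (Fin k) F))
    (hI : I = Ideal.span (Set.range fun j : Fin k =>
      MvPowerSeries.X (⟨0, hk⟩ : Fin k) ^ 2 - MvPowerSeries.X j ^ 2)) :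
    ∃ φ : PowerSeries F →+* (MvPowerSeries (Fin k) F ⧸ I),
      φ PowerSeries.X = Ideal.Quotient.mk I (MvPowerSeries.X (⟨0, hk⟩ : Fin k)) ∧
      (∀ a : F, φ ((PowerSeries.C (R := F)) a) = algebraMap F (MvPowerSeries (Fin k) F ⧸ I) a) ∧
      (letI : Module (PowerSeries F) (MvPowerSeries (Fin k) F ⧸ I) :=
        Module.compHom (MvPowerSeries (Fin k) F ⧸ I) φ
       Nonempty (Module.Basis (Fin (2 ^ (k - 1))) (PowerSeries F) (MvPowerSeries (Fin k) F ⧸ I))) := by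
  classical
  obtain ⟨n, rfl⟩ : ∃ n, k = n + 1 := ⟨k - 1, by omega⟩
  have hz : (⟨0, hk⟩ : Fin (n + 1)) = 0 := rfl
  rw [hz] at hI
  simp only [hz]
  subst hI
  set Isp : Ideal (MvPowerSeries (Fin (n + 1)) F) :=
    Ideal.span (Set.range fun j : Fin (n + 1) =>
      MvPowerSeries.X (0 : Fin (n+1)) ^ 2 - MvPowerSeries.X j ^ 2) with hIsp
  set φ : PowerSeries F →+* (MvPowerSeries (Fin (n + 1)) F ⧸ Isp) :=
    (Ideal.Quotient.mk Isp).comp Unlink9.psi with hφ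
  refine ⟨φ, ?_, ?_, ?_⟩
  · rw [hφ, RingHom.comp_apply, Unlink9.psi_X]
  · intro a
    rw [hφ, RingHom.comp_apply, Unlink9.psi_C]
    have h1 : (MvPowerSeries.C (σ := Fin (n+1)) (R := F) a)
        = algebraMap F (MvPowerSeries (Fin (n+1)) F) a := by
      rw [MvPowerSeries.algebraMap_apply]
      simp
    rw [h1, Ideal.Quotient.mk_algebraMap]
  · letI : Module (PowerSeries F) (MvPowerSeries (Fin (n + 1)) F ⧸ Isp) :=
      Module.compHom (MvPowerSeries (Fin (n + 1)) F ⧸ Isp) φ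
    have hsmul : ∀ (c : PowerSeries F) (y : MvPowerSeries (Fin (n + 1)) F ⧸ Isp),
        c • y = Ideal.Quotient.mk Isp (Unlink9.psi c) * y := fun c y => rfl
    let Q : ((Fin n → Bool) → PowerSeries F) →ₗ[PowerSeries F]
        (MvPowerSeries (Fin (n + 1)) F ⧸ Isp) :=
      { toFun := fun c => ∑ ε : Fin n → Bool,
          c ε • Ideal.Quotient.mk Isp (MvPowerSeries.monomial (Unlink9.E ε) 1)
        map_add' := by
          intro c c'
          simp only [Pi.add_apply, add_smul, Finset.sum_add_distrib]
        map_smul' := by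
          intro r c
          simp only [Pi.smul_apply, smul_eq_mul, RingHom.id_apply, Finset.smul_sum, mul_smul] }
    have hQ : ∀ c, Q c = Ideal.Quotient.mk Isp
        (∑ ε : Fin n → Bool, Unlink9.psi (c ε) * MvPowerSeries.monomial (Unlink9.E ε) 1) := by
      intro c
      rw [map_sum]
      refine Finset.sum_congr rfl fun ε _ => ?_
      show c ε • Ideal.Quotient.mk Isp (MvPowerSeries.monomial (Unlink9.E ε) 1) = _
      rw [hsmul, ← map_mul]
    have hinj : Function.Injective Q := by
      rw [injective_iff_map_eq_zero]
      intro c hc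
      have hmem : (∑ ε : Fin n → Bool,
          Unlink9.psi (c ε) * MvPowerSeries.monomial (Unlink9.E ε) 1) ∈ Isp := by
        rw [← Ideal.Quotient.eq_zero_iff_mem, ← hQ c]
        exact hc
      rw [hIsp] at hmem
      obtain ⟨w, hw⟩ := Ideal.mem_span_range_iff_exists_fun.mp hmem
      funext ε'
      apply PowerSeries.ext
      intro m
      have h1 : Unlink9.SC (∑ ε : Fin n → Bool,
          Unlink9.psi (c ε) * MvPowerSeries.monomial (Unlink9.E ε) 1) ε' m
          = PowerSeries.coeff m (c ε') := by
        rw [Unlink9.SC_finsum]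
        simp only [Unlink9.SC_psi_mul_monomial]
        rw [Finset.sum_ite_eq' Finset.univ ε' (fun ε => PowerSeries.coeff m (c ε)),
          if_pos (Finset.mem_univ _)]
      have h2 : Unlink9.SC (∑ ε : Fin n → Bool,
          Unlink9.psi (c ε) * MvPowerSeries.monomial (Unlink9.E ε) 1) ε' m = 0 := by
        rw [← hw, Unlink9.SC_finsum]
        exact Finset.sum_eq_zero fun g _ => Unlink9.SC_mul_gen g (w g) ε' m
      rw [← h1, h2]; simp
    have hsurj : Function.Surjective Q := by
      intro y
      obtain ⟨f, rfl⟩ := Ideal.Quotient.mk_surjective y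
      obtain ⟨g, hg1, hg2⟩ := Unlink9.exists_reduce Finset.univ.toList f
      have hred : ∀ j : Fin n, Unlink9.Red j g := fun j =>
        hg2 j (Or.inl (by simp [Finset.mem_toList]))
      refine ⟨fun ε => PowerSeries.mk fun m => g (Unlink9.E ε + Finsupp.single 0 m), ?_⟩
      rw [hQ, ← Unlink9.reduced_eq_sum g hred]
      refine (Ideal.Quotient.eq).mpr ?_
      have := Isp.neg_mem hg1
      rwa [neg_sub] at this
    have hcard : Fintype.card (Fin n → Bool) = 2 ^ (n + 1 - 1) := by
      simp
    exact ⟨(Module.Basis.ofEquivFun (LinearEquiv.ofBijective Q ⟨hinj, hsurj⟩).symm).reindex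
      (Fintype.equivFinOfCardEq hcard)⟩
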